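/- A locally finite tree T has finitely many cone types if and only if T is isomorphic, as a rooted directed graph, to the universal covering tree of some finite connected graph. -/

import Mathlib

/-- A rooted directed multigraph. -/
structure RGraph where
  V : Type
  E : Type
  s : E → V
  t : E → V
  root : V

namespace RGraph

/-- `l` is a path: consecutive edges are composable. -/
def IsPath (A : RGraph) (l : List A.E) : Prop :=
  l.Chain' (fun e f => A.t e = A.s f)

/-- `l` is a path starting at the vertex `q`. -/
def PathFrom (A : RGraph) (q : A.V) (l : List A.E) : Prop :=
  A.IsPath l ∧ ∀ e ∈ l.head?, A.s e = q

/-- The target of the path `l` started at `q` (equal to `q` for the empty path). -/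
def pathTarget (A : RGraph) (q : A.V) (l : List A.E) : A.V :=
  l.foldl (fun _ e => A.t e) q

@[simp] lemma pathTarget_nil (A : RGraph) (q : A.V) : A.pathTarget q [] = q := rfl

@[simp] lemma pathTarget_cons (A : RGraph) (q : A.V) (a : A.E) (l : List A.E) :
    A.pathTarget q (a :: l) = A.pathTarget (A.t a) l := rfl

lemma pathTarget_append (A : RGraph) (q : A.V) (l l' : List A.E) :
    A.pathTarget q (l ++ l') = A.pathTarget (A.pathTarget q l) l' := by
  simp [pathTarget]

@[simp] lemma pathTarget_append_single (A : RGraph) (q : A.V) (l : List A.E) (e : A.E) :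
    A.pathTarget q (l ++ [e]) = A.t e := by
  rw [pathTarget_append]; rfl

lemma pathFrom_nil (A : RGraph) (q : A.V) : A.PathFrom q [] :=
  ⟨List.isChain_nil, by simp⟩

lemma pathTarget_getLast {A : RGraph} {q : A.V} {l : List A.E} {x : A.E}
    (hx : x ∈ l.getLast?) : A.pathTarget q l = A.t x := by
  induction l generalizing q with
  | nil => simp at hx
  | cons a l ih =>
    cases l with
    | nil => simp at hx; subst hx; rfl
    | cons b l =>
      rw [List.getLast?_cons_cons] at hx
      simpa using ih (q := A.t a) hx

lemma pathFrom_append_single {A : RGraph} {q : A.V} {l : List A.E} {e : A.E}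
    (h : A.PathFrom q l) (he : A.s e = A.pathTarget q l) :
    A.PathFrom q (l ++ [e]) := by
  constructor
  · apply List.isChain_append.mpr
    refine ⟨h.1, List.isChain_singleton _, ?_⟩
    intro x hx y hy
    simp at hy
    subst hy
    rw [he]
    exact (pathTarget_getLast hx).symm
  · intro f hf
    cases l with
    | nil =>
      simp at hf
      subst hf
      simpa using he
    | cons a l =>
      simp at hf
      subst hf
      exact h.2 a (by simp)

/-- `w` is reachable from `q` by an oriented path. -/
def Reach (A : RGraph) (q w : A.V) : Prop :=
  ∃ l, A.PathFrom q l ∧ A.pathTarget q l = w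

lemma reach_self (A : RGraph) (q : A.V) : A.Reach q q :=
  ⟨[], A.pathFrom_nil q, rfl⟩

lemma reach_target {A : RGraph} {q : A.V} {e : A.E} (h : A.Reach q (A.s e)) :
    A.Reach q (A.t e) := by
  obtain ⟨l, hl, ht⟩ := h
  exact ⟨l ++ [e], pathFrom_append_single hl ht.symm, by simp⟩

/-- A graph is connected (as a rooted directed graph) if every vertex is reachable
from the root. -/
def Connected (A : RGraph) : Prop := ∀ w : A.V, A.Reach A.root w

/-- A graph is a tree if the target map from paths emanating from the root to
vertices is a bijection. -/
def IsTree (A : RGraph) : Prop :=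
  Function.Bijective
    (fun l : {l : List A.E // A.PathFrom A.root l} => A.pathTarget A.root l.1)

/-- A graph is locally finite if every vertex has finitely many outgoing edges. -/
def LocallyFinite (A : RGraph) : Prop := ∀ q : A.V, Finite {e : A.E // A.s e = q}

/-- Adjacency: there is an edge from `v` to `w`. -/
def Adj (A : RGraph) (v w : A.V) : Prop := ∃ e, A.s e = v ∧ A.t e = w

/-- The induced rooted subgraph on all vertices reachable from `q` (the "cone" at `q`). -/
def subgraph (A : RGraph) (q : A.V) : RGraph where
  V := {w // A.Reach q w}
  E := {e // A.Reach q (A.s e)}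
  s := fun e => ⟨A.s e.1, e.2⟩
  t := fun e => ⟨A.t e.1, reach_target e.2⟩
  root := ⟨q, A.reach_self q⟩

/-- The truncation of the cone at `v` to vertices at distance at most `d` from `v`. -/
def trunc (A : RGraph) (v : A.V) (d : ℕ) : RGraph where
  V := {w // ∃ l, A.PathFrom v l ∧ A.pathTarget v l = w ∧ l.length ≤ d}
  E := {e // ∃ l, A.PathFrom v l ∧ A.pathTarget v l = A.s e ∧ l.length < d}
  s := fun e => ⟨A.s e.1, e.2.imp fun _ h => ⟨h.1, h.2.1, h.2.2.le⟩⟩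
  t := fun e => ⟨A.t e.1, by
    obtain ⟨l, h1, h2, h3⟩ := e.2
    exact ⟨l ++ [e.1], pathFrom_append_single h1 h2.symm, by simp,
      by simp only [List.length_append, List.length_singleton]; omega⟩⟩
  root := ⟨v, [], A.pathFrom_nil v, rfl, Nat.zero_le d⟩

/-- The universal covering tree of `A`: vertices are the paths emanating from the root. -/
def cover (A : RGraph) : RGraph where
  V := {l : List A.E // A.PathFrom A.root l}
  E := {x : {l : List A.E // A.PathFrom A.root l} × A.E //
          A.s x.2 = A.pathTarget A.root x.1.1}
  s := fun x => x.1.1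
  t := fun x => ⟨x.1.1.1 ++ [x.1.2], pathFrom_append_single x.1.1.2 x.2⟩
  root := ⟨[], A.pathFrom_nil _⟩

end RGraph

/-- A morphism of rooted directed multigraphs. -/
structure GraphHom (A B : RGraph) where
  v : A.V → B.V
  e : A.E → B.E
  root_eq : v A.root = B.root
  s_eq : ∀ x, B.s (e x) = v (A.s x)
  t_eq : ∀ x, B.t (e x) = v (A.t x)

namespace GraphHom

variable {A B : RGraph}

/-- The unique path lifting property. -/
def UPLP (p : GraphHom A B) : Prop :=
  ∀ (q : A.V) (l' : List B.E), B.PathFrom (p.v q) l' →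
    ∃! l : List A.E, A.PathFrom q l ∧ l.map p.e = l'

/-- A covering morphism: surjective on vertices, with the unique path lifting property. -/
def IsCovering (p : GraphHom A B) : Prop := Function.Surjective p.v ∧ p.UPLP

/-- An isomorphism of graphs: bijective on vertices and on edges. -/
def IsIso (p : GraphHom A B) : Prop := Function.Bijective p.v ∧ Function.Bijective p.e

/-- The restriction of the edge map to the edges emanating from `q`. -/
def outMap (p : GraphHom A B) (q : A.V) :
    {e : A.E // A.s e = q} → {e' : B.E // B.s e' = p.v q} :=
  fun e => ⟨p.e e.1, by rw [p.s_eq, e.2]⟩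

lemma isPath_map (p : GraphHom A B) {l : List A.E} (h : A.IsPath l) :
    B.IsPath (l.map p.e) := by
  rw [RGraph.IsPath]
  exact (List.isChain_map ..).2 (List.IsChain.imp (fun a b hab => by rw [p.t_eq, p.s_eq, hab]) h)

lemma pathFrom_map (p : GraphHom A B) {q : A.V} {l : List A.E} (h : A.PathFrom q l) :
    B.PathFrom (p.v q) (l.map p.e) := by
  refine ⟨p.isPath_map h.1, ?_⟩
  intro f hf
  cases l with
  | nil => simp at hf
  | cons a l =>
    simp at hf
    subst hf
    rw [p.s_eq, h.2 a (by simp)]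

lemma pathTarget_map (p : GraphHom A B) (q : A.V) (l : List A.E) :
    B.pathTarget (p.v q) (l.map p.e) = p.v (A.pathTarget q l) := by
  induction l generalizing q with
  | nil => rfl
  | cons a l ih =>
    show B.pathTarget (B.t (p.e a)) (l.map p.e) = _
    rw [p.t_eq]
    exact ih (A.t a)

lemma reach_map (p : GraphHom A B) {q w : A.V} (h : A.Reach q w) :
    B.Reach (p.v q) (p.v w) := by
  obtain ⟨l, hl, ht⟩ := h
  exact ⟨l.map p.e, p.pathFrom_map hl, by rw [p.pathTarget_map, ht]⟩

end GraphHom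

/-- Two graphs are isomorphic. -/
def RGraph.Iso (A B : RGraph) : Prop := ∃ p : GraphHom A B, p.IsIso

/-- The universal covering morphism from the universal covering tree of `A` to `A`. -/
def RGraph.uCover (A : RGraph) : GraphHom A.cover A where
  v := fun l => A.pathTarget A.root l.1
  e := fun x => x.1.2
  root_eq := rfl
  s_eq := fun x => x.2
  t_eq := fun x => by
    show A.t x.1.2 = A.pathTarget A.root (x.1.1.1 ++ [x.1.2])
    simp

/-- The morphism induced between universal covering trees by a morphism of graphs. -/
def GraphHom.coverMap {A B : RGraph} (p : GraphHom A B) : GraphHom A.cover B.cover where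
  v := fun l => ⟨l.1.map p.e, by have := p.pathFrom_map l.2; rwa [p.root_eq] at this⟩
  e := fun x =>
    ⟨(⟨x.1.1.1.map p.e, by have := p.pathFrom_map x.1.1.2; rwa [p.root_eq] at this⟩,
      p.e x.1.2), by
        show B.s (p.e x.1.2) = B.pathTarget B.root (x.1.1.1.map p.e)
        rw [p.s_eq, x.2, ← p.root_eq, p.pathTarget_map]⟩
  root_eq := Subtype.ext rfl
  s_eq := fun _ => rfl
  t_eq := fun x => by
    apply Subtype.ext
    simp [RGraph.cover]

/-- `A` is a covering quotient of `T`. -/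
def IsCovQuotient (T A : RGraph) : Prop := ∃ p : GraphHom T A, p.IsCovering

/-- `A` is a minimal covering quotient of `T`: a covering quotient with the minimal
number of vertices among all covering quotients of `T`. -/
def IsMinCovQuotient (T A : RGraph) : Prop :=
  IsCovQuotient T A ∧
    ∀ B : RGraph, IsCovQuotient T B → Cardinal.mk A.V ≤ Cardinal.mk B.V

/-- `T` has finitely many cone types. -/
def FinManyCones (T : RGraph) : Prop :=
  ∃ S : Set T.V, S.Finite ∧ ∀ v : T.V, ∃ w ∈ S, RGraph.Iso (T.subgraph v) (T.subgraph w)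

/-- A self-similar tree: a locally finite tree with finitely many cone types. -/
def SelfSimilarTree (T : RGraph) : Prop := T.IsTree ∧ T.LocallyFinite ∧ FinManyCones T

namespace RGraph

/-- The automorphism group of a graph, realized as the group of root-preserving,
adjacency-preserving permutations of the vertex set (for trees this is the same as the
automorphism group in the sense of graph morphisms, since in a tree an edge is determined
by its endpoints). -/
def autGroup (T : RGraph) : Subgroup (Equiv.Perm T.V) where
  carrier := {g | g T.root = T.root ∧ ∀ v w, T.Adj v w ↔ T.Adj (g v) (g w)}
  one_mem' := ⟨rfl, fun _ _ => Iff.rfl⟩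
  mul_mem' := by
    rintro a b ⟨ha1, ha2⟩ ⟨hb1, hb2⟩
    refine ⟨?_, fun v w => ?_⟩
    · show a (b T.root) = T.root
      rw [hb1, ha1]
    · exact (hb2 v w).trans (ha2 (b v) (b w))
  inv_mem' := by
    rintro a ⟨ha1, ha2⟩
    refine ⟨?_, fun v w => ?_⟩
    · show a.symm T.root = T.root
      rw [Equiv.symm_apply_eq]
      exact ha1.symm
    · have h := ha2 (a⁻¹ v) (a⁻¹ w)
      simpa using h.symm

/-- The subgroup of permutations of the vertices fixing every vertex outside
of the cone at `v`. -/
def fixOutside (T : RGraph) (v : T.V) : Subgroup (Equiv.Perm T.V) where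
  carrier := {g | ∀ w, ¬ T.Reach v w → g w = w}
  one_mem' := fun _ _ => rfl
  mul_mem' := by
    intro a b ha hb w hw
    show a (b w) = w
    rw [hb w hw, ha w hw]
  inv_mem' := by
    intro a ha w hw
    show a.symm w = w
    rw [Equiv.symm_apply_eq]
    exact (ha w hw).symm

/-- The rigid stabilizer of the vertex `v`: automorphisms fixing every vertex
outside the subtree spanned by `v` and its descendants. -/
def rist (T : RGraph) (v : T.V) : Subgroup (Equiv.Perm T.V) :=
  T.autGroup ⊓ T.fixOutside v

/-- The set of vertices at distance `n` from the root. -/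
def level (T : RGraph) (n : ℕ) : Set T.V :=
  {v | ∃ l : List T.E, T.PathFrom T.root l ∧ T.pathTarget T.root l = v ∧ l.length = n}

/-- The `n`-th rigid level stabilizer: the subgroup generated by the rigid stabilizers
of the vertices at distance `n` from the root. -/
def ristLevel (T : RGraph) (n : ℕ) : Subgroup (Equiv.Perm T.V) :=
  ⨆ v ∈ T.level n, T.rist v

/-- The `n`-th rigid level stabilizer, as a subgroup of the automorphism group. -/
def ristIn (T : RGraph) (n : ℕ) : Subgroup ↥T.autGroup :=
  (T.ristLevel n).comap T.autGroup.subtype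

end RGraph

/-- A recurrent double edge: a pair of distinct parallel edges such that there is an
oriented loop which contains one of them, or from which their common source can be
reached. -/
def HasRecDoubleEdge (A : RGraph) : Prop :=
  ∃ e₁ e₂ : A.E, e₁ ≠ e₂ ∧ A.s e₁ = A.s e₂ ∧ A.t e₁ = A.t e₂ ∧
    ((∃ (q : A.V) (l : List A.E),
        A.PathFrom q l ∧ l ≠ [] ∧ A.pathTarget q l = q ∧ (e₁ ∈ l ∨ e₂ ∈ l)) ∨
     (∃ (q : A.V) (l : List A.E),
        A.PathFrom q l ∧ l ≠ [] ∧ A.pathTarget q l = q ∧ A.Reach q (A.s e₁)))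

/-- A deterministic finite automaton over the alphabet `A`, with a partial transition
function, a single initial state, and all states accepting. -/
structure PDFA (A : Type) where
  Q : Type
  finQ : Finite Q
  neQ : Nonempty Q
  δ : Q → A → Option Q
  init : Q

namespace PDFA

variable {A : Type} (M : PDFA A)

/-- Running the automaton from state `q` on a word; `none` if it gets stuck. -/
def run : M.Q → List A → Option M.Q
  | q, [] => some q
  | q, a :: w => (M.δ q a).bind fun q' => run q' w

/-- The regular language accepted by `M`. -/
def Lang : Set (List A) := {w | (M.run M.init w).isSome}

lemma run_append (q : M.Q) (u w : List A) :
    M.run q (u ++ w) = (M.run q u).bind fun q' => M.run q' w := by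
  induction u generalizing q with
  | nil => simp [run]
  | cons a u ih =>
    simp only [List.cons_append, run]
    cases M.δ q a with
    | none => simp
    | some q' => simp [ih]

lemma isSome_of_append {q : M.Q} {u w : List A}
    (h : (M.run q (u ++ w)).isSome) : (M.run q u).isSome := by
  rw [run_append] at h
  cases hu : M.run q u with
  | none => rw [hu] at h; simp at h
  | some q' => simp

/-- The path language tree of `M`: the tree whose vertices are the words of the
language of `M`, with an edge from `w` to `w ++ [a]` whenever both belong to the
language. -/
def pathTree : RGraph where
  V := {w : List A // (M.run M.init w).isSome}
  E := {x : List A × A // (M.run M.init (x.1 ++ [x.2])).isSome}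
  s := fun x => ⟨x.1.1, M.isSome_of_append x.2⟩
  t := fun x => ⟨x.1.1 ++ [x.1.2], x.2⟩
  root := ⟨[], by simp [run]⟩

/-- The underlying rooted directed multigraph of the automaton `M`. -/
def underlying : RGraph where
  V := M.Q
  E := {x : M.Q × A // (M.δ x.1 x.2).isSome}
  s := fun x => x.1.1
  t := fun x => (M.δ x.1.1 x.1.2).get x.2
  root := M.init

/-- `M` is geometrically minimal: it has the minimal number of states among all DFAs
(over arbitrary finite nonempty alphabets) whose path language trees are isomorphic,
as unlabelled rooted trees, to the path language tree of `M`. -/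
def GeomMinimal : Prop :=
  ∀ (B : Type), Finite B → Nonempty B → ∀ N : PDFA B,
    RGraph.Iso M.pathTree N.pathTree → Nat.card M.Q ≤ Nat.card N.Q

/-- The state reached after reading the word `w` of the language. -/
def qstate (w : List A) (h : (M.run M.init w).isSome) : M.Q :=
  (M.run M.init w).get h

/-- The group of admissible permutations at the state `q`: permutations `τ` of the
alphabet fixing the letters outside `Σ(q)` and satisfying `δ(q, τ a) = δ(q, a)`. -/
def SymQ (q : M.Q) : Subgroup (Equiv.Perm A) where
  carrier := {τ | ∀ a, M.δ q (τ a) = M.δ q a ∧ (M.δ q a = none → τ a = a)}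
  one_mem' := fun _ => ⟨rfl, fun _ => rfl⟩
  mul_mem' := by
    intro τ₁ τ₂ h1 h2 a
    constructor
    · show M.δ q (τ₁ (τ₂ a)) = M.δ q a
      rw [(h1 (τ₂ a)).1, (h2 a).1]
    · intro hn
      show τ₁ (τ₂ a) = a
      rw [(h2 a).2 hn, (h1 a).2 hn]
  inv_mem' := by
    intro τ h a
    have h1 := (h (τ.symm a)).1
    rw [Equiv.apply_symm_apply] at h1
    constructor
    · show M.δ q (τ.symm a) = M.δ q a
      exact h1.symm
    · intro hn
      have h2 := (h (τ.symm a)).2 (h1.symm.trans hn)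
      rw [Equiv.apply_symm_apply] at h2
      show τ.symm a = a
      exact h2.symm

end PDFA

/-- Extending a portrait to a map on words (the first argument is the accumulated
prefix): the `i`-th letter of the image word is the image of the `i`-th letter under
the local injection at the prefix of length `i - 1`. -/
def portraitExtend {A : Type} (σ : List A → A → A) : List A → List A → List A
  | _, [] => []
  | pre, a :: w => σ pre a :: portraitExtend σ (pre ++ [a]) w

/-!
In the universal covering tree of `A`, the cone at a path is the universal covering tree of `A`
rerooted at the endpoint of the path, so it depends only on that endpoint and there are at most
`|A.V|` cone types.

Conversely, let `A` be the graph whose vertices are the cone types of `T`, the edges out of a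
type being those out of a fixed representative. Choosing for each vertex `w` an isomorphism of
the cone at `w` with the cone at its representative maps the out-edges of `w` bijectively onto
those of its type, compatibly with the cone types of the targets. A morphism out of a tree that
is bijective on out-edges lifts paths uniquely, hence identifies the tree with the universal
covering tree of its target. `A` is finite because there are finitely many cone types and `T` is
locally finite.
-/

namespace RGraph

variable {A : RGraph}

lemma pathFrom_cons {q : A.V} {a : A.E} {l : List A.E} :
    A.PathFrom q (a :: l) ↔ A.s a = q ∧ A.PathFrom (A.t a) l := by
  change List.IsChain _ (a :: l) ∧ _ ↔ _ ∧ List.IsChain _ l ∧ _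
  simp only [List.isChain_cons, List.head?_cons, Option.mem_def, Option.some.injEq, forall_eq']
  constructor
  · rintro ⟨⟨h₁, h₂⟩, hs⟩
    exact ⟨hs, h₂, fun e he => (h₁ e he).symm⟩
  · rintro ⟨hs, h₂, h₁⟩
    exact ⟨⟨fun e he => (h₁ e he).symm, h₂⟩, hs⟩

lemma PathFrom.append {q : A.V} {l₁ l₂ : List A.E} (h₁ : A.PathFrom q l₁)
    (h₂ : A.PathFrom (A.pathTarget q l₁) l₂) : A.PathFrom q (l₁ ++ l₂) := by
  induction l₁ generalizing q with
  | nil => exact h₂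
  | cons a l ih =>
    rw [pathFrom_cons] at h₁
    exact pathFrom_cons.2 ⟨h₁.1, ih h₁.2 h₂⟩

lemma reach_of_edge {q w : A.V} {e : A.E} (he : A.s e = q) (h : A.Reach (A.t e) w) :
    A.Reach q w :=
  let ⟨l, hl, ht⟩ := h
  ⟨e :: l, pathFrom_cons.2 ⟨he, hl⟩, ht⟩

lemma Reach.trans {q w x : A.V} (h₁ : A.Reach q w) (h₂ : A.Reach w x) : A.Reach q x := by
  obtain ⟨l, hl, rfl⟩ := h₁
  obtain ⟨l', hl', rfl⟩ := h₂
  exact ⟨l ++ l', hl.append hl', pathTarget_append ..⟩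

lemma IsTree.connected (hA : A.IsTree) : A.Connected := fun w =>
  let ⟨l, hl⟩ := hA.2 w
  ⟨l.1, l.2, hl⟩

end RGraph

namespace GraphHom

variable {A B C : RGraph}

protected def id (A : RGraph) : GraphHom A A :=
  ⟨id, id, rfl, fun _ => rfl, fun _ => rfl⟩

def comp (q : GraphHom B C) (p : GraphHom A B) : GraphHom A C where
  v := q.v ∘ p.v
  e := q.e ∘ p.e
  root_eq := by simp [p.root_eq, q.root_eq]
  s_eq x := by simp [q.s_eq, p.s_eq]
  t_eq x := by simp [q.t_eq, p.t_eq]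

noncomputable def inv (p : GraphHom A B) (hp : p.IsIso) : GraphHom B A where
  v := (Equiv.ofBijective p.v hp.1).symm
  e := (Equiv.ofBijective p.e hp.2).symm
  root_eq := hp.1.injective <| by simp [Equiv.ofBijective_apply_symm_apply, p.root_eq]
  s_eq x := hp.1.injective <| by simp [Equiv.ofBijective_apply_symm_apply, ← p.s_eq]
  t_eq x := hp.1.injective <| by simp [Equiv.ofBijective_apply_symm_apply, ← p.t_eq]

@[simp] lemma inv_v_apply (p : GraphHom A B) (hp : p.IsIso) (x : A.V) :
    (p.inv hp).v (p.v x) = x :=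
  (Equiv.ofBijective p.v hp.1).symm_apply_apply x

lemma inv_isIso (p : GraphHom A B) (hp : p.IsIso) : (p.inv hp).IsIso :=
  ⟨(Equiv.ofBijective p.v hp.1).symm.bijective, (Equiv.ofBijective p.e hp.2).symm.bijective⟩

lemma connected_of_surjective (p : GraphHom A B) (hA : A.Connected)
    (hp : Function.Surjective p.v) : B.Connected := fun w => by
  obtain ⟨v, rfl⟩ := hp w
  simpa [p.root_eq] using p.reach_map (hA v)

end GraphHom

namespace RGraph

variable {A B C : RGraph}

lemma Iso.refl (A : RGraph) : A.Iso A :=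
  ⟨GraphHom.id A, Function.bijective_id, Function.bijective_id⟩

lemma Iso.symm : A.Iso B → B.Iso A
  | ⟨p, hp⟩ => ⟨p.inv hp, p.inv_isIso hp⟩

lemma Iso.trans : A.Iso B → B.Iso C → A.Iso C
  | ⟨p, hp⟩, ⟨q, hq⟩ => ⟨q.comp p, hq.1.comp hp.1, hq.2.comp hp.2⟩

lemma subgraph_reach_iff {v : A.V} {x y : (A.subgraph v).V} :
    (A.subgraph v).Reach x y ↔ A.Reach x.1 y.1 := by
  constructor
  · rintro ⟨L, hL, rfl⟩
    induction L generalizing x with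
    | nil => exact A.reach_self _
    | cons a L ih =>
      rw [pathFrom_cons] at hL
      exact reach_of_edge (congrArg Subtype.val hL.1) (ih hL.2)
  · rintro ⟨l, hl, hy⟩
    induction l generalizing x with
    | nil => exact Subtype.ext hy ▸ (A.subgraph v).reach_self x
    | cons a l ih =>
      rw [pathFrom_cons] at hl
      have ha : A.Reach v (A.s a) := hl.1 ▸ x.2
      exact reach_of_edge (e := (⟨a, ha⟩ : (A.subgraph v).E)) (Subtype.ext hl.1) (ih hl.2 hy)

lemma subgraph_subgraph_iso (v : A.V) (w : (A.subgraph v).V) :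
    ((A.subgraph v).subgraph w).Iso (A.subgraph w.1) := by
  refine ⟨⟨fun y => ⟨y.1.1, subgraph_reach_iff.1 y.2⟩, fun x => ⟨x.1.1, subgraph_reach_iff.1 x.2⟩,
    rfl, fun _ => rfl, fun _ => rfl⟩, ⟨?_, ?_⟩, ?_, ?_⟩
  · intro a b hab
    have h := congrArg Subtype.val hab
    exact Subtype.ext (Subtype.ext h)
  · exact fun ⟨z, hz⟩ => ⟨⟨⟨z, w.2.trans hz⟩, subgraph_reach_iff.2 hz⟩, rfl⟩
  · intro a b hab
    have h := congrArg Subtype.val hab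
    exact Subtype.ext (Subtype.ext h)
  · exact fun ⟨e, he⟩ => ⟨⟨⟨e, w.2.trans he⟩, subgraph_reach_iff.2 he⟩, rfl⟩

lemma _root_.GraphHom.IsIso.subgraph_iso {p : GraphHom A B} (hp : p.IsIso) (v : A.V) :
    (A.subgraph v).Iso (B.subgraph (p.v v)) := by
  have reach_inv {y : B.V} (hy : B.Reach (p.v v) y) : A.Reach v ((p.inv hp).v y) := by
    simpa using (p.inv hp).reach_map hy
  refine ⟨⟨fun w => ⟨p.v w.1, p.reach_map w.2⟩,
    fun x => ⟨p.e x.1, p.s_eq x.1 ▸ p.reach_map x.2⟩,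
    rfl, fun x => Subtype.ext (p.s_eq x.1), fun x => Subtype.ext (p.t_eq x.1)⟩,
    ⟨?_, ?_⟩, ?_, ?_⟩
  · exact fun a b hab => Subtype.ext (hp.1.injective (congrArg Subtype.val hab))
  · intro ⟨y, hy⟩
    exact ⟨⟨_, reach_inv hy⟩, Subtype.ext ((Equiv.ofBijective p.v hp.1).apply_symm_apply y)⟩
  · exact fun a b hab => Subtype.ext (hp.2.injective (congrArg Subtype.val hab))
  · intro ⟨f, hf⟩
    exact ⟨⟨(p.inv hp).e f, (p.inv hp).s_eq f ▸ reach_inv hf⟩,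
      Subtype.ext ((Equiv.ofBijective p.e hp.2).apply_symm_apply f)⟩

lemma _root_.GraphHom.IsIso.subgraph_val_iso {v w : A.V}
    {p : GraphHom (A.subgraph v) (A.subgraph w)} (hp : p.IsIso) (x : (A.subgraph v).V) :
    (A.subgraph x.1).Iso (A.subgraph (p.v x).1) :=
  (subgraph_subgraph_iso v x).symm.trans ((hp.subgraph_iso x).trans (subgraph_subgraph_iso w _))

lemma cover_reach_iff {l m : A.cover.V} :
    A.cover.Reach l m ↔ ∃ ext, A.PathFrom (A.pathTarget A.root l.1) ext ∧ m.1 = l.1 ++ ext := by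
  constructor
  · rintro ⟨L, hL, rfl⟩
    induction L generalizing l with
    | nil => exact ⟨[], A.pathFrom_nil _, by simp⟩
    | cons E L ih =>
      obtain ⟨rfl, hL'⟩ := pathFrom_cons.1 hL
      obtain ⟨ext, hext, heq⟩ := ih hL'
      refine ⟨E.1.2 :: ext, pathFrom_cons.2 ⟨E.2, ?_⟩, by
        rw [pathTarget_cons, heq]; simp [cover]⟩
      simpa [cover] using hext
  · rintro ⟨ext, hext, hm⟩
    induction ext generalizing l with
    | nil => exact Subtype.ext (by simpa using hm) ▸ A.cover.reach_self l
    | cons e ext ih =>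
      obtain ⟨he, hext⟩ := pathFrom_cons.1 hext
      exact reach_of_edge (e := ⟨(l, e), he⟩) rfl
        (ih (by simpa [cover] using hext) (by simpa [cover] using hm))

abbrev reroot (A : RGraph) (q : A.V) : RGraph := { A with root := q }

lemma reroot_cover_iso_subgraph (l : A.cover.V) :
    (A.reroot (A.pathTarget A.root l.1)).cover.Iso (A.cover.subgraph l) := by
  refine ⟨⟨fun m => ⟨⟨l.1 ++ m.1, l.2.append m.2⟩, cover_reach_iff.2 ⟨m.1, m.2, rfl⟩⟩,
    fun x => ⟨⟨(⟨l.1 ++ x.1.1.1, l.2.append x.1.1.2⟩, x.1.2), by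
        rw [pathTarget_append]; exact x.2⟩, cover_reach_iff.2 ⟨x.1.1.1, x.1.1.2, rfl⟩⟩,
    Subtype.ext (Subtype.ext (List.append_nil _)), fun _ => rfl,
    fun _ => Subtype.ext (Subtype.ext (List.append_assoc ..))⟩, ⟨?_, ?_⟩, ?_, ?_⟩
  · intro a b hab
    have h := congrArg (fun x => x.1.1) hab
    exact Subtype.ext (List.append_cancel_left h)
  · intro ⟨m, hm⟩
    obtain ⟨ext, hext, hm⟩ := cover_reach_iff.1 hm
    exact ⟨⟨ext, hext⟩, Subtype.ext (Subtype.ext hm.symm)⟩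
  · intro a b hab
    have h := congrArg (fun x => x.1.1) hab
    simp only [Prod.mk.injEq, Subtype.mk.injEq] at h
    exact Subtype.ext (Prod.ext (Subtype.ext (List.append_cancel_left h.1)) h.2)
  · intro ⟨E, hE⟩
    obtain ⟨ext, hext, hE'⟩ := cover_reach_iff.1 hE
    refine ⟨⟨(⟨ext, hext⟩, E.1.2), ?_⟩, Subtype.ext (Subtype.ext (Prod.ext
      (Subtype.ext hE'.symm) rfl))⟩
    show A.s E.1.2 = A.pathTarget (A.pathTarget A.root l.1) ext
    rw [← pathTarget_append, ← hE']
    exact E.2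

lemma cover_subgraph_iso {l l' : A.cover.V}
    (h : A.pathTarget A.root l.1 = A.pathTarget A.root l'.1) :
    (A.cover.subgraph l).Iso (A.cover.subgraph l') :=
  (reroot_cover_iso_subgraph l).symm.trans (h ▸ reroot_cover_iso_subgraph l')

end RGraph

lemma FinManyCones.of_map {T : RGraph} {α : Type*} [Finite α] (f : T.V → α)
    (hf : ∀ v w, f v = f w → (T.subgraph v).Iso (T.subgraph w)) : FinManyCones T := by
  have : Nonempty T.V := ⟨T.root⟩
  classical
  refine ⟨Set.range (Function.invFun f), Set.finite_range _, fun v => ⟨_, ⟨f v, rfl⟩, ?_⟩⟩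
  exact hf _ _ (Function.invFun_eq ⟨v, rfl⟩).symm

lemma finManyCones_of_iso_cover {T A : RGraph} [Finite A.V] (h : T.Iso A.cover) :
    FinManyCones T := by
  obtain ⟨p, hp⟩ := h
  refine .of_map (fun v => A.pathTarget A.root (p.v v).1) fun v w hvw => ?_
  exact (hp.subgraph_iso v).trans
    ((RGraph.cover_subgraph_iso hvw).trans (hp.subgraph_iso w).symm)

namespace GraphHom

variable {A B : RGraph}

def IsLocallyBijective (p : GraphHom A B) : Prop := ∀ q, Function.Bijective (p.outMap q)

namespace IsLocallyBijective

variable {p : GraphHom A B}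

lemma edge_eq_of_map_eq (hp : p.IsLocallyBijective) {a a' : A.E} (h : A.s a = A.s a')
    (he : p.e a = p.e a') : a = a' :=
  congrArg Subtype.val ((hp (A.s a')).1 (a₁ := ⟨a, h⟩) (a₂ := ⟨a', rfl⟩) (Subtype.ext he))

lemma path_eq_of_map_eq (hp : p.IsLocallyBijective) {q : A.V} {l l' : List A.E}
    (hl : A.PathFrom q l) (hl' : A.PathFrom q l') (h : l.map p.e = l'.map p.e) : l = l' := by
  induction l generalizing q l' with
  | nil => exact (List.map_eq_nil_iff.1 h.symm).symm
  | cons a l ih =>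
    cases l' with
    | nil => simp at h
    | cons a' l' =>
      simp only [List.map_cons, List.cons.injEq] at h
      rw [RGraph.pathFrom_cons] at hl hl'
      obtain rfl := hp.edge_eq_of_map_eq (hl.1.trans hl'.1.symm) h.1
      exact congrArg (a :: ·) (ih hl.2 hl'.2 h.2)

lemma exists_lift (hp : p.IsLocallyBijective) {q : A.V} {l' : List B.E}
    (h : B.PathFrom (p.v q) l') : ∃ l, A.PathFrom q l ∧ l.map p.e = l' := by
  induction l' generalizing q with
  | nil => exact ⟨[], A.pathFrom_nil q, rfl⟩
  | cons a' l' ih =>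
    obtain ⟨ha', hl'⟩ := RGraph.pathFrom_cons.1 h
    obtain ⟨⟨a, ha⟩, heq⟩ := (hp q).2 ⟨a', ha'⟩
    have hpa : p.e a = a' := congrArg Subtype.val heq
    obtain ⟨l, hl, rfl⟩ := ih (q := A.t a) (by rwa [← p.t_eq, hpa])
    exact ⟨a :: l, RGraph.pathFrom_cons.2 ⟨ha, hl⟩, by simp [hpa]⟩

lemma coverMap_isIso (hp : p.IsLocallyBijective) : p.coverMap.IsIso := by
  refine ⟨⟨fun l l' h => ?_, ?_⟩, ?_, ?_⟩
  · exact Subtype.ext (hp.path_eq_of_map_eq l.2 l'.2 (congrArg Subtype.val h))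
  · intro ⟨m, hm⟩
    obtain ⟨l, hl, rfl⟩ := hp.exists_lift (p.root_eq ▸ hm)
    exact ⟨⟨l, hl⟩, rfl⟩
  · intro x y h
    obtain ⟨h₁, h₂⟩ := Prod.ext_iff.1 (Subtype.ext_iff.1 h)
    have hl : x.1.1 = y.1.1 :=
      Subtype.ext (hp.path_eq_of_map_eq x.1.1.2 y.1.1.2 (Subtype.ext_iff.1 h₁))
    have hs : A.s x.1.2 = A.s y.1.2 := by rw [x.2, y.2, hl]
    exact Subtype.ext (Prod.ext hl (hp.edge_eq_of_map_eq hs h₂))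
  · intro F
    have hF : B.PathFrom (p.v A.root) F.1.1.1 := by rw [p.root_eq]; exact F.1.1.2
    obtain ⟨l, hl, hmap⟩ := hp.exists_lift hF
    have hsF : B.s F.1.2 = p.v (A.pathTarget A.root l) := by
      rw [F.2, ← hmap, ← p.root_eq, p.pathTarget_map]
    obtain ⟨⟨e, he⟩, heq⟩ := (hp _).2 ⟨F.1.2, hsF⟩
    exact ⟨⟨(⟨l, hl⟩, e), he⟩,
      Subtype.ext (Prod.ext (Subtype.ext hmap) (congrArg Subtype.val heq))⟩

end IsLocallyBijective

end GraphHom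

namespace RGraph

lemma uCover_isIso {T : RGraph} (hT : T.IsTree) : T.uCover.IsIso := by
  refine ⟨hT, fun x y hxy => ?_, fun e => ?_⟩
  · have hxy' : x.1.2 = y.1.2 := hxy
    have ht : T.pathTarget T.root x.1.1.1 = T.pathTarget T.root y.1.1.1 := by
      rw [← x.2, ← y.2, hxy']
    have hl : x.1.1 = y.1.1 := hT.1 ht
    exact Subtype.ext (Prod.ext hl hxy')
  · obtain ⟨l, hl⟩ := hT.2 (T.s e)
    exact ⟨⟨(l, e), hl.symm⟩, rfl⟩

lemma IsTree.iso_cover_of_isLocallyBijective {T A : RGraph} (hT : T.IsTree) {p : GraphHom T A}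
    (hp : p.IsLocallyBijective) : T.Iso A.cover :=
  (Iso.symm ⟨T.uCover, uCover_isIso hT⟩).trans ⟨p.coverMap, hp.coverMap_isIso⟩

variable (T : RGraph)

abbrev coneSetoid : Setoid T.V where
  r v w := (T.subgraph v).Iso (T.subgraph w)
  iseqv := ⟨fun _ => Iso.refl _, Iso.symm, Iso.trans⟩

attribute [local instance] coneSetoid

/-- The edges out of a cone type `c` are the edges of `T` out of its chosen representative
`c.out`. -/
def coneTypeGraph : RGraph where
  V := Quotient T.coneSetoid
  E := {e : T.E // T.s e = (⟦T.s e⟧ : Quotient T.coneSetoid).out}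
  s e := ⟦T.s e.1⟧
  t e := ⟦T.t e.1⟧
  root := ⟦T.root⟧

variable {T}

noncomputable def coneIso (w : T.V) :
    GraphHom (T.subgraph w) (T.subgraph (⟦w⟧ : Quotient T.coneSetoid).out) :=
  (Quotient.mk_out (s := T.coneSetoid) w).symm.choose

lemma coneIso_isIso (w : T.V) : (coneIso w).IsIso :=
  (Quotient.mk_out (s := T.coneSetoid) w).symm.choose_spec

noncomputable def transportEdge {w : T.V} (e : T.E) (he : T.s e = w) : T.E :=
  ((coneIso w).e ⟨e, he ▸ T.reach_self w⟩).1

lemma s_transportEdge {w : T.V} (e : T.E) (he : T.s e = w) :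
    T.s (transportEdge e he) = (⟦w⟧ : Quotient T.coneSetoid).out := by
  have h := (coneIso w).s_eq ⟨e, he ▸ T.reach_self w⟩
  rw [show (T.subgraph w).s ⟨e, _⟩ = (T.subgraph w).root from Subtype.ext he,
    (coneIso w).root_eq] at h
  exact congrArg Subtype.val h

lemma coneType_t_transportEdge {w : T.V} (e : T.E) (he : T.s e = w) :
    (⟦T.t (transportEdge e he)⟧ : Quotient T.coneSetoid) = ⟦T.t e⟧ := by
  refine Quotient.sound (Iso.symm ?_)
  have h := (coneIso_isIso w).subgraph_val_iso ((T.subgraph w).t ⟨e, he ▸ T.reach_self w⟩)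
  have ht : T.t (transportEdge e he) = _ :=
    congrArg Subtype.val ((coneIso w).t_eq ⟨e, he ▸ T.reach_self w⟩)
  rwa [ht]

lemma transportEdge_injective {w : T.V} {e e' : T.E} (he : T.s e = w) (he' : T.s e' = w)
    (h : transportEdge e he = transportEdge e' he') : e = e' :=
  congrArg Subtype.val ((coneIso_isIso w).2.injective (Subtype.ext h))

lemma exists_transportEdge_eq {w : T.V} {f : T.E}
    (hf : T.s f = (⟦w⟧ : Quotient T.coneSetoid).out) :
    ∃ e, ∃ he : T.s e = w, transportEdge e he = f := by
  obtain ⟨x, hx⟩ := (coneIso_isIso w).2.surjective ⟨f, hf ▸ T.reach_self _⟩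
  have hsx : (T.subgraph w).s x = (T.subgraph w).root := by
    refine (coneIso_isIso w).1.injective ?_
    rw [← (coneIso w).s_eq, hx, (coneIso w).root_eq]
    exact Subtype.ext hf
  exact ⟨x.1, congrArg Subtype.val hsx, congrArg Subtype.val hx⟩

variable (T)

noncomputable def toConeTypeGraph : GraphHom T T.coneTypeGraph where
  v v := ⟦v⟧
  e e := ⟨transportEdge e rfl, by rw [s_transportEdge, Quotient.out_eq]⟩
  root_eq := rfl
  s_eq e := by
    show ⟦T.s (transportEdge e rfl)⟧ = ⟦T.s e⟧
    rw [s_transportEdge, Quotient.out_eq]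
  t_eq e := coneType_t_transportEdge e rfl

variable {T}

lemma toConeTypeGraph_e {w : T.V} (e : T.E) (he : T.s e = w) :
    (T.toConeTypeGraph.e e).1 = transportEdge e he := by
  subst he
  rfl

lemma toConeTypeGraph_isLocallyBijective : T.toConeTypeGraph.IsLocallyBijective := by
  intro q
  constructor
  · intro ⟨a, ha⟩ ⟨a', ha'⟩ h
    have h' := congrArg (fun f => f.1.1) h
    simp only [GraphHom.outMap, toConeTypeGraph_e a ha, toConeTypeGraph_e a' ha'] at h'
    exact Subtype.ext (transportEdge_injective ha ha' h')
  · intro ⟨f, hf⟩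
    have hsf : T.s f.1 = (⟦q⟧ : Quotient T.coneSetoid).out := f.2.trans (congrArg Quotient.out hf)
    obtain ⟨e, he, hef⟩ := exists_transportEdge_eq hsf
    exact ⟨⟨e, he⟩, Subtype.ext (Subtype.ext ((toConeTypeGraph_e e he).trans hef))⟩

lemma finite_coneTypes (h : FinManyCones T) : Finite (Quotient T.coneSetoid) := by
  obtain ⟨S, hS, hcover⟩ := h
  have := hS.to_subtype
  refine Finite.of_surjective (fun w : S => ⟦w.1⟧) fun c => ?_
  obtain ⟨v, rfl⟩ := Quotient.mk_surjective c
  obtain ⟨w, hw, hvw⟩ := hcover v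
  exact ⟨⟨w, hw⟩, Quotient.sound hvw.symm⟩

lemma finite_coneTypeGraph_E [Finite (Quotient T.coneSetoid)] (hT : T.LocallyFinite) :
    Finite T.coneTypeGraph.E := by
  have : ∀ c : Quotient T.coneSetoid, Finite {e : T.E // T.s e = c.out} := fun c => hT c.out
  refine Finite.of_injective (β := Σ c : Quotient T.coneSetoid, {e : T.E // T.s e = c.out})
    (fun f => ⟨_, f.1, f.2⟩) fun f f' h => ?_
  exact Subtype.ext (congrArg (fun x => x.2.1) h)

end RGraph

/-- Belk–Bleak–Matucci. A locally finite tree has finitely many cone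
types if and only if it is isomorphic, as a rooted directed graph, to the universal
covering tree of a finite connected graph. -/
theorem stmt7 (T : RGraph) (hT : T.IsTree) (hlf : T.LocallyFinite) :
    FinManyCones T ↔
      ∃ A : RGraph, Finite A.V ∧ Finite A.E ∧ A.Connected ∧ RGraph.Iso T A.cover := by
  constructor
  · intro hcones
    have := RGraph.finite_coneTypes hcones
    exact ⟨T.coneTypeGraph, this, RGraph.finite_coneTypeGraph_E hlf,
      T.toConeTypeGraph.connected_of_surjective hT.connected Quotient.mk_surjective,
      hT.iso_cover_of_isLocallyBijective RGraph.toConeTypeGraph_isLocallyBijective⟩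
  · rintro ⟨A, hA, -, -, hiso⟩
    exact finManyCones_of_iso_cover hiso
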